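/- Counting paths extending a trace, black node case: With the same setup, if v is a black node (not incident to any revealed edge) and k ≥ 1, the number of directed simple paths of length L in K_n containing Q with v as an endpoint equals 2·(h + k − 1)!·(n − λ + k − 1)! / ((k−1)!·(n − λ)!); if k = 0 this count is 0. -/

import Mathlib

open Finset

/-- Oriented edge set of a directed simple path of length `L` in the complete
graph, given by an injection of its `L+1` nodes. -/
def pedges {V : Type} [DecidableEq V] {L : ℕ} (f : Fin (L + 1) ↪ V) :
    Finset (V × V) :=
  (Finset.univ : Finset (Fin L)).image (fun i => (f i.castSucc, f i.succ))

/-- Tails (sources) of the oriented edges of a trace. -/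
def tails {V : Type} [DecidableEq V] (Q : Finset (V × V)) : Finset V :=
  Q.image Prod.fst

/-- Heads (targets) of the oriented edges of a trace. -/
def heads {V : Type} [DecidableEq V] (Q : Finset (V × V)) : Finset V :=
  Q.image Prod.snd

/-- Nodes touched by the trace. -/
def traceVerts {V : Type} [DecidableEq V] (Q : Finset (V × V)) : Finset V :=
  tails Q ∪ heads Q

/-- Gray nodes: endpoints of the maximal revealed segments, i.e. nodes that are
a tail but not a head, or a head but not a tail, of edges of `Q`. -/
def grayNodes {V : Type} [DecidableEq V] (Q : Finset (V × V)) : Finset V :=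
  (tails Q \ heads Q) ∪ (heads Q \ tails Q)

set_option linter.unusedSectionVars false
set_option linter.unusedVariables false

namespace CEB

variable {V : Type} [Fintype V] [DecidableEq V]

def rngF {m : ℕ} (f : Fin m ↪ V) : Finset V := Finset.univ.image f

lemma mem_rngF {m : ℕ} {f : Fin m ↪ V} {x : V} : x ∈ rngF f ↔ ∃ i, f i = x := by
  simp [rngF]

lemma mem_pedges {L : ℕ} {f : Fin (L+1) ↪ V} {p : V × V} :
    p ∈ pedges f ↔ ∃ i : Fin L, f i.castSucc = p.1 ∧ f i.succ = p.2 := by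
  simp [pedges, Prod.ext_iff]

lemma mem_tails {Q : Finset (V×V)} {x : V} : x ∈ tails Q ↔ ∃ y, (x, y) ∈ Q := by
  constructor
  · intro hx
    rcases Finset.mem_image.1 hx with ⟨e, he, h1⟩
    exact ⟨e.2, by rwa [show (x, e.2) = e from Prod.ext_iff.2 ⟨h1.symm, rfl⟩]⟩
  · rintro ⟨y, hy⟩; exact Finset.mem_image.2 ⟨(x,y), hy, rfl⟩

lemma mem_heads {Q : Finset (V×V)} {x : V} : x ∈ heads Q ↔ ∃ y, (y, x) ∈ Q := by
  constructor
  · intro hx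
    rcases Finset.mem_image.1 hx with ⟨e, he, h1⟩
    exact ⟨e.1, by rwa [show (e.1, x) = e from Prod.ext_iff.2 ⟨rfl, h1.symm⟩]⟩
  · rintro ⟨y, hy⟩; exact Finset.mem_image.2 ⟨(y,x), hy, rfl⟩

def ftail {m : ℕ} (f : Fin (m+2) ↪ V) : Fin (m+1) ↪ V :=
  ⟨fun i => f i.succ, f.injective.comp (Fin.succ_injective _)⟩

@[simp] lemma ftail_apply {m : ℕ} (f : Fin (m+2) ↪ V) (i : Fin (m+1)) :
    ftail f i = f i.succ := rfl

lemma ftail_zero {m : ℕ} (f : Fin (m+2) ↪ V) : ftail f 0 = f 1 := by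
  simp [ftail, Fin.succ_zero_eq_one]

lemma rngF_cons {m : ℕ} (f : Fin (m+2) ↪ V) :
    rngF f = insert (f 0) (rngF (ftail f)) := by
  ext x
  simp only [mem_rngF, Finset.mem_insert]
  constructor
  · rintro ⟨i, rfl⟩
    cases i using Fin.cases with
    | zero => exact Or.inl rfl
    | succ j => exact Or.inr ⟨j, rfl⟩
  · rintro (rfl | ⟨j, rfl⟩)
    · exact ⟨0, rfl⟩
    · exact ⟨j.succ, rfl⟩

lemma pedges_cons {m : ℕ} (f : Fin (m+2) ↪ V) :
    pedges f = insert (f 0, f 1) (pedges (ftail f)) := by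
  ext p
  simp only [mem_pedges, Finset.mem_insert]
  constructor
  · rintro ⟨i, h1, h2⟩
    cases i using Fin.cases with
    | zero =>
        left
        rw [Prod.ext_iff]
        constructor
        · rw [← h1]; rfl
        · rw [← h2]; exact congrArg f Fin.succ_zero_eq_one
    | succ j =>
        right
        exact ⟨j, h1, h2⟩
  · rintro (h | ⟨j, h1, h2⟩)
    · refine ⟨0, ?_, ?_⟩
      · rw [h]; rfl
      · rw [h]; show f (Fin.succ 0) = f 1; rw [Fin.succ_zero_eq_one]
    · exact ⟨j.succ, h1, h2⟩


def fcons {m : ℕ} (v : V) (g : Fin (m+1) ↪ V) (hv : v ∉ rngF g) : Fin (m+2) ↪ V :=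
  ⟨Fin.cons v g, by
    intro a b hab
    cases a using Fin.cases with
    | zero =>
      cases b using Fin.cases with
      | zero => rfl
      | succ j =>
        exfalso; apply hv
        simp only [Fin.cons_zero, Fin.cons_succ] at hab
        exact mem_rngF.2 ⟨j, hab.symm⟩
    | succ i =>
      cases b using Fin.cases with
      | zero =>
        exfalso; apply hv
        simp only [Fin.cons_zero, Fin.cons_succ] at hab
        exact mem_rngF.2 ⟨i, hab⟩
      | succ j =>
        simp only [Fin.cons_succ] at hab
        exact congrArg Fin.succ (g.injective hab)⟩

@[simp] lemma fcons_zero {m : ℕ} (v : V) (g : Fin (m+1) ↪ V) (hv : v ∉ rngF g) :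
    fcons v g hv 0 = v := rfl

lemma ftail_fcons {m : ℕ} (v : V) (g : Fin (m+1) ↪ V) (hv : v ∉ rngF g) :
    ftail (fcons v g hv) = g := by
  apply DFunLike.ext
  intro i
  simp [ftail, fcons]
  exact Fin.cons_succ (α := fun _ => V) v g i

lemma card_cons {m : ℕ} (v : V) (P : (Fin (m+1) ↪ V) → Prop) [DecidablePred P] :
    (Finset.univ.filter fun f : Fin (m+2) ↪ V => f 0 = v ∧ P (ftail f)).card
    = (Finset.univ.filter fun g : Fin (m+1) ↪ V => v ∉ rngF g ∧ P g).card := by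
  refine Finset.card_bij' (fun f _ => ftail f)
    (fun g hg => fcons v g (Finset.mem_filter.1 hg).2.1) ?_ ?_ ?_ ?_
  · intro f hf
    rcases Finset.mem_filter.1 hf with ⟨-, h0, hP⟩
    refine Finset.mem_filter.2 ⟨Finset.mem_univ _, ?_, hP⟩
    intro hmem
    rcases mem_rngF.1 hmem with ⟨i, hi⟩
    have hi' : f i.succ = v := hi
    have : i.succ = 0 := f.injective (hi'.trans h0.symm)
    exact Fin.succ_ne_zero i this
  · intro g hg
    rcases Finset.mem_filter.1 hg with ⟨-, hv, hP⟩
    refine Finset.mem_filter.2 ⟨Finset.mem_univ _, rfl, ?_⟩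
    rwa [ftail_fcons]
  · intro f hf
    rcases Finset.mem_filter.1 hf with ⟨-, h0, hP⟩
    apply DFunLike.ext
    intro i
    cases i using Fin.cases with
    | zero => simp [fcons, h0]; rfl
    | succ j => simp [fcons, ftail]
  · intro g hg
    exact ftail_fcons _ _ _


noncomputable def cnt (m : ℕ) (A : Finset V) (Q : Finset (V×V)) (S : Finset V) (v : V) : ℕ :=
  (Finset.univ.filter fun f : Fin (m+1) ↪ V =>
    rngF f ⊆ A ∧ Q ⊆ pedges f ∧ S ⊆ rngF f ∧ f 0 = v).card

lemma trace_sub_rng {m : ℕ} {f : Fin (m+1) ↪ V} {Q : Finset (V×V)} (h : Q ⊆ pedges f) :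
    traceVerts Q ⊆ rngF f := by
  intro x hx
  rcases Finset.mem_union.1 hx with hx | hx
  · rcases mem_tails.1 hx with ⟨y, hy⟩
    rcases mem_pedges.1 (h hy) with ⟨i, h1, -⟩
    exact mem_rngF.2 ⟨_, h1⟩
  · rcases mem_heads.1 hx with ⟨y, hy⟩
    rcases mem_pedges.1 (h hy) with ⟨i, -, h2⟩
    exact mem_rngF.2 ⟨_, h2⟩

lemma cnt_zero (m : ℕ) (A : Finset V) (Q : Finset (V×V)) (S : Finset V) (v : V)
    (hvT : v ∉ traceVerts Q) (hvS : v ∉ S) (hST : ∀ x ∈ S, x ∉ traceVerts Q)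
    (hbig : m + 1 < (traceVerts Q).card + S.card + 1) : cnt m A Q S v = 0 := by
  rw [cnt, Finset.card_eq_zero, Finset.filter_eq_empty_iff]
  rintro f - ⟨hA, hQ, hS, h0⟩
  have hsub : insert v (traceVerts Q ∪ S) ⊆ rngF f := by
    apply Finset.insert_subset
    · exact mem_rngF.2 ⟨0, h0⟩
    · exact Finset.union_subset (trace_sub_rng hQ) hS
  have hdisj : Disjoint (traceVerts Q) S :=
    Finset.disjoint_right.2 fun a ha => hST a ha
  have hcard1 : (insert v (traceVerts Q ∪ S)).card = (traceVerts Q).card + S.card + 1 := by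
    rw [Finset.card_insert_of_notMem (by
      intro h; rcases Finset.mem_union.1 h with h | h
      · exact hvT h
      · exact hvS h), Finset.card_union_of_disjoint hdisj]
  have hcard2 : (rngF f).card = m + 1 := by
    rw [rngF, Finset.card_image_of_injective _ f.injective]
    simp
  have := Finset.card_le_card hsub
  omega

lemma cnt_head_zero (m : ℕ) (A : Finset V) (Q : Finset (V×V)) (S : Finset V) (w : V)
    (hw : w ∈ heads Q) : cnt m A Q S w = 0 := by
  rw [cnt, Finset.card_eq_zero, Finset.filter_eq_empty_iff]
  rintro f - ⟨hA, hQ, hS, h0⟩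
  rcases mem_heads.1 hw with ⟨y, hy⟩
  rcases mem_pedges.1 (hQ hy) with ⟨i, -, h2⟩
  have : i.succ = 0 := f.injective (by rw [h0]; exact h2)
  exact Fin.succ_ne_zero i this

section Witness

variable {R : ℕ} {f₀ : Fin (R+1) ↪ V} {Q : Finset (V×V)}

lemma out_unique (hQ : Q ⊆ pedges f₀) {a b c : V}
    (h1 : (a,b) ∈ Q) (h2 : (a,c) ∈ Q) : b = c := by
  rcases mem_pedges.1 (hQ h1) with ⟨i, hi1, hi2⟩
  rcases mem_pedges.1 (hQ h2) with ⟨j, hj1, hj2⟩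
  have : i = j := Fin.castSucc_injective _ (f₀.injective (hi1.trans hj1.symm))
  subst this
  exact hi2.symm.trans hj2

lemma in_unique (hQ : Q ⊆ pedges f₀) {a b c : V}
    (h1 : (a,c) ∈ Q) (h2 : (b,c) ∈ Q) : a = b := by
  rcases mem_pedges.1 (hQ h1) with ⟨i, hi1, hi2⟩
  rcases mem_pedges.1 (hQ h2) with ⟨j, hj1, hj2⟩
  have : i = j := Fin.succ_injective _ (f₀.injective (hi2.trans hj2.symm))
  subst this
  exact hi1.symm.trans hj1

lemma no_loop (hQ : Q ⊆ pedges f₀) {a b : V} (h : (a,b) ∈ Q) : a ≠ b := by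
  rcases mem_pedges.1 (hQ h) with ⟨i, hi1, hi2⟩
  intro hab
  have : i.castSucc = i.succ := f₀.injective (by rw [hi1, hi2, hab])
  have := congrArg Fin.val this
  simp [Fin.val_succ] at this

lemma exists_start (hQ : Q ⊆ pedges f₀) (hne : Q.Nonempty) :
    ∃ x, x ∈ tails Q ∧ x ∉ heads Q := by
  classical
  set J : Finset (Fin R) :=
    Finset.univ.filter (fun i : Fin R => (f₀ i.castSucc, f₀ i.succ) ∈ Q) with hJ
  have hJne : J.Nonempty := by
    rcases hne with ⟨e, he⟩
    rcases mem_pedges.1 (hQ he) with ⟨i, hi1, hi2⟩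
    refine ⟨i, Finset.mem_filter.2 ⟨Finset.mem_univ _, ?_⟩⟩
    rwa [show (f₀ i.castSucc, f₀ i.succ) = e from Prod.ext_iff.2 ⟨hi1, hi2⟩]
  set i₀ := J.min' hJne with hi₀
  have hi₀J : i₀ ∈ J := J.min'_mem hJne
  refine ⟨f₀ i₀.castSucc, ?_, ?_⟩
  · exact mem_tails.2 ⟨f₀ i₀.succ, (Finset.mem_filter.1 hi₀J).2⟩
  · intro hx
    rcases mem_heads.1 hx with ⟨y, hy⟩
    rcases mem_pedges.1 (hQ hy) with ⟨j, hj1, hj2⟩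
    have hji : j.succ = i₀.castSucc := f₀.injective hj2
    have hjJ : j ∈ J := by
      refine Finset.mem_filter.2 ⟨Finset.mem_univ _, ?_⟩
      rwa [show (f₀ j.castSucc, f₀ j.succ) = (y, f₀ i₀.castSucc) from
        Prod.ext_iff.2 ⟨hj1, hj2⟩]
    have h1 : (j : ℕ) + 1 = (i₀ : ℕ) := by
      have := congrArg Fin.val hji
      simpa [Fin.val_succ] using this
    have h2 : (i₀ : ℕ) ≤ (j : ℕ) := J.min'_le j hjJ
    omega

lemma card_tails_eq (hQ : Q ⊆ pedges f₀) : (tails Q).card = Q.card := by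
  apply Finset.card_image_of_injOn
  intro e1 h1 e2 h2 hfst
  have e1d : e1 = (e1.1, e1.2) := rfl
  have e2d : e2 = (e2.1, e2.2) := rfl
  rw [e1d, e2d, hfst]
  rw [out_unique hQ (show (e2.1, e1.2) ∈ Q by rw [← hfst, ← e1d]; exact h1)
    (show (e2.1, e2.2) ∈ Q by rw [← e2d]; exact h2)]

lemma card_heads_eq (hQ : Q ⊆ pedges f₀) : (heads Q).card = Q.card := by
  apply Finset.card_image_of_injOn
  intro e1 h1 e2 h2 hsnd
  have e1d : e1 = (e1.1, e1.2) := rfl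
  have e2d : e2 = (e2.1, e2.2) := rfl
  rw [e1d, e2d, hsnd]
  rw [in_unique hQ (show (e1.1, e2.2) ∈ Q by rw [← hsnd, ← e1d]; exact h1)
    (show (e2.1, e2.2) ∈ Q by rw [← e2d]; exact h2)]

lemma card_sdiff_symm (hQ : Q ⊆ pedges f₀) :
    (heads Q \ tails Q).card = (tails Q \ heads Q).card := by
  have h1 := Finset.card_sdiff_add_card_inter (tails Q) (heads Q)
  have h2 := Finset.card_sdiff_add_card_inter (heads Q) (tails Q)
  rw [Finset.inter_comm] at h2
  have := (card_tails_eq hQ).trans (card_heads_eq hQ).symm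
  omega

end Witness

lemma step_w (m : ℕ) (A : Finset V) (Q : Finset (V×V)) (S : Finset V) (v w : V)
    (hvA : v ∈ A) (hvt : v ∉ tails Q) (hvS : v ∉ S) :
    (Finset.univ.filter fun f : Fin (m+2) ↪ V =>
      (rngF f ⊆ A ∧ Q ⊆ pedges f ∧ S ⊆ rngF f ∧ f 0 = v) ∧ f 1 = w).card
    = cnt m (A.erase v) Q S w := by
  have h1 : ∀ f : Fin (m+2) ↪ V,
      (((rngF f ⊆ A ∧ Q ⊆ pedges f ∧ S ⊆ rngF f ∧ f 0 = v) ∧ f 1 = w) ↔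
      (f 0 = v ∧ (rngF (ftail f) ⊆ A.erase v ∧ Q ⊆ pedges (ftail f) ∧
        S ⊆ rngF (ftail f) ∧ (ftail f) 0 = w))) := by
    intro f
    constructor
    · rintro ⟨⟨hA, hQ, hS, h0⟩, h1w⟩
      refine ⟨h0, ?_, ?_, ?_, ?_⟩
      · intro x hx
        rcases mem_rngF.1 hx with ⟨i, rfl⟩
        refine Finset.mem_erase.2 ⟨?_, hA (mem_rngF.2 ⟨i.succ, rfl⟩)⟩
        intro hxv
        have : i.succ = (0 : Fin (m+2)) := f.injective (by rw [h0, ← hxv]; rfl)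
        exact Fin.succ_ne_zero i this
      · intro e he
        have := hQ he
        rw [pedges_cons] at this
        rcases Finset.mem_insert.1 this with h | h
        · exfalso
          apply hvt
          apply mem_tails.2
          refine ⟨e.2, ?_⟩
          have : e.1 = v := by rw [h, h0]
          rwa [show (v, e.2) = e from Prod.ext_iff.2 ⟨this.symm, rfl⟩]
        · exact h
      · intro x hx
        have := hS hx
        rw [rngF_cons] at this
        rcases Finset.mem_insert.1 this with h | h
        · exact absurd (by rw [← h0, ← h]; exact hx) hvS
        · exact h
      · rw [ftail_zero]; exact h1w
    · rintro ⟨h0, hA, hQ, hS, h1w⟩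
      refine ⟨⟨?_, ?_, ?_, h0⟩, ?_⟩
      · rw [rngF_cons]
        apply Finset.insert_subset
        · rw [h0]; exact hvA
        · exact hA.trans (Finset.erase_subset _ _)
      · rw [pedges_cons]
        exact hQ.trans (Finset.subset_insert _ _)
      · rw [rngF_cons]
        exact hS.trans (Finset.subset_insert _ _)
      · rw [← ftail_zero]; exact h1w
  rw [Finset.filter_congr (fun f _ => h1 f),
    card_cons v (fun g : Fin (m+1) ↪ V =>
      rngF g ⊆ A.erase v ∧ Q ⊆ pedges g ∧ S ⊆ rngF g ∧ g 0 = w), cnt]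
  apply congrArg Finset.card
  apply Finset.filter_congr
  intro g _
  constructor
  · rintro ⟨-, h⟩; exact h
  · rintro ⟨hA, h⟩
    exact ⟨fun hv => (Finset.mem_erase.1 (hA hv)).1 rfl, hA, h⟩

lemma step_gray (m : ℕ) (A : Finset V) (Q : Finset (V×V)) (S : Finset V) (v w₂ : V)
    (hvA : v ∈ A) (hvS : v ∉ S) (hvw : (v, w₂) ∈ Q) :
    cnt (m+1) A Q S v = cnt m (A.erase v) (Q.erase (v, w₂)) S w₂ := by
  have h1 : ∀ f : Fin (m+2) ↪ V,
      ((rngF f ⊆ A ∧ Q ⊆ pedges f ∧ S ⊆ rngF f ∧ f 0 = v) ↔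
      (f 0 = v ∧ (rngF (ftail f) ⊆ A.erase v ∧ Q.erase (v, w₂) ⊆ pedges (ftail f) ∧
        S ⊆ rngF (ftail f) ∧ (ftail f) 0 = w₂))) := by
    intro f
    constructor
    · rintro ⟨hA, hQ, hS, h0⟩
      have hf1 : f 1 = w₂ := by
        have := hQ hvw
        rw [pedges_cons] at this
        rcases Finset.mem_insert.1 this with h | h
        · exact ((Prod.ext_iff.1 h).2).symm
        · exfalso
          rcases mem_pedges.1 h with ⟨i, hi1, -⟩
          have hi1' : f i.castSucc.succ = v := hi1
          have : i.castSucc.succ = (0 : Fin (m+2)) := f.injective (by rw [h0, hi1'])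
          exact Fin.succ_ne_zero i.castSucc this
      refine ⟨h0, ?_, ?_, ?_, ?_⟩
      · intro x hx
        rcases mem_rngF.1 hx with ⟨i, rfl⟩
        refine Finset.mem_erase.2 ⟨?_, hA (mem_rngF.2 ⟨i.succ, rfl⟩)⟩
        intro hxv
        have : i.succ = (0 : Fin (m+2)) := f.injective (by rw [h0, ← hxv]; rfl)
        exact Fin.succ_ne_zero i this
      · intro e he
        rcases Finset.mem_erase.1 he with ⟨hne, heQ⟩
        have := hQ heQ
        rw [pedges_cons] at this
        rcases Finset.mem_insert.1 this with h | h
        · exfalso; apply hne; rw [h, h0, hf1]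
        · exact h
      · intro x hx
        have := hS hx
        rw [rngF_cons] at this
        rcases Finset.mem_insert.1 this with h | h
        · exact absurd (by rw [← h0, ← h]; exact hx) hvS
        · exact h
      · rw [ftail_zero]; exact hf1
    · rintro ⟨h0, hA, hQ, hS, h2w⟩
      refine ⟨?_, ?_, ?_, h0⟩
      · rw [rngF_cons]
        apply Finset.insert_subset
        · rw [h0]; exact hvA
        · exact hA.trans (Finset.erase_subset _ _)
      · intro e he
        rw [pedges_cons]
        by_cases hev : e = (v, w₂)
        · apply Finset.mem_insert.2
          left
          rw [hev, h0, ← ftail_zero, h2w]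
        · exact Finset.mem_insert.2 (Or.inr (hQ (Finset.mem_erase.2 ⟨hev, he⟩)))
      · rw [rngF_cons]
        exact hS.trans (Finset.subset_insert _ _)
  rw [cnt, Finset.filter_congr (fun f _ => h1 f),
    card_cons v (fun g : Fin (m+1) ↪ V =>
      rngF g ⊆ A.erase v ∧ Q.erase (v, w₂) ⊆ pedges g ∧ S ⊆ rngF g ∧ g 0 = w₂), cnt]
  apply congrArg Finset.card
  apply Finset.filter_congr
  intro g _
  constructor
  · rintro ⟨-, h⟩; exact h
  · rintro ⟨hA, h⟩
    exact ⟨fun hv => (Finset.mem_erase.1 (hA hv)).1 rfl, hA, h⟩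

lemma cnt_S_erase (m : ℕ) (A : Finset V) (Q : Finset (V×V)) (S : Finset V) (w : V)
    (hw : w ∈ S) : cnt m A Q S w = cnt m A Q (S.erase w) w := by
  rw [cnt, cnt]
  apply congrArg Finset.card
  apply Finset.filter_congr
  intro f _
  constructor
  · rintro ⟨hA, hQ, hS, h0⟩
    exact ⟨hA, hQ, (Finset.erase_subset _ _).trans hS, h0⟩
  · rintro ⟨hA, hQ, hS, h0⟩
    refine ⟨hA, hQ, ?_, h0⟩
    intro x hx
    by_cases hxw : x = w
    · rw [hxw]; exact mem_rngF.2 ⟨0, h0⟩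
    · exact hS (Finset.mem_erase.2 ⟨hxw, hx⟩)

def FB (h k c : ℕ) : ℕ :=
  (h + k - 1).descFactorial h * (c + k - 1).descFactorial (k - 1)

def FG (h k c : ℕ) : ℕ :=
  (h + k - 1).descFactorial (h - 1) * (c + k).descFactorial k

lemma pascal (b h : ℕ) :
    (b+1).descFactorial h = b.descFactorial h + h * b.descFactorial (h-1) := by
  cases h with
  | zero => simp
  | succ h =>
    rw [Nat.succ_descFactorial_succ, Nat.descFactorial_succ]
    by_cases hb : h ≤ b
    · have : b + 1 = (b - h) + (h + 1) := by omega
      rw [this, Nat.add_mul]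
      simp
    · have h0 : b.descFactorial h = 0 := by
        rw [Nat.descFactorial_eq_zero_iff_lt]; omega
      simp [h0]

lemma FG_eq_FB (h₁ k c : ℕ) : FG (h₁+1) k c = FB h₁ (k+1) c := by
  rw [FG, FB]
  have e1 : h₁ + 1 + k - 1 = h₁ + k := by omega
  have e2 : h₁ + 1 - 1 = h₁ := by omega
  have e3 : h₁ + (k + 1) - 1 = h₁ + k := by omega
  have e4 : c + (k + 1) - 1 = c + k := by omega
  have e5 : k + 1 - 1 = k := by omega
  rw [e1, e2, e3, e4, e5]

lemma FB_step (h k c : ℕ) :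
    FB h (k+2) c = h * FG h (k+1) c + (c + k + 1) * FB h (k+1) c := by
  rw [FB, FG, FB]
  have e1 : h + (k+2) - 1 = (h + k) + 1 := by omega
  have e2 : c + (k+2) - 1 = (c + k) + 1 := by omega
  have e3 : k + 2 - 1 = k + 1 := by omega
  have e4 : h + (k+1) - 1 = h + k := by omega
  have e5 : c + (k+1) = (c + k) + 1 := by omega
  have e6 : c + (k+1) - 1 = c + k := by omega
  have e7 : k + 1 - 1 = k := by omega
  rw [e1, e2, e3, e4, e6, e7, e5]
  rw [Nat.succ_descFactorial_succ (c+k) k]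
  rw [pascal (h+k) h]
  ring

lemma key_FB (q s c k₁ : ℕ) (h1 : k₁ = 0 → 1 ≤ q + s) :
    FB (q+s) (k₁+1) c = q * FG (q+s) k₁ c + s * FB (q+s-1) (k₁+1) c
      + (c + k₁) * (if 1 ≤ k₁ then FB (q+s) k₁ c else 0) := by
  cases k₁ with
  | zero =>
    simp only [Nat.lt_irrefl, if_neg (by omega : ¬ (1 ≤ 0)), Nat.mul_zero, Nat.add_zero]
    have hqs : 1 ≤ q + s := h1 rfl
    rw [FB, FG, FB]
    have e1 : q + s + 1 - 1 = q + s := by omega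
    have e2 : c + 1 - 1 = c := by omega
    have e3 : q + s + 0 - 1 = q + s - 1 := by omega
    have e4 : c + 0 = c := by omega
    have e5 : q + s - 1 + 1 - 1 = q + s - 1 := by omega
    have e6 : (1 : ℕ) - 1 = 0 := rfl
    rw [e1, e2, e3, e4, e5, e6]
    simp only [Nat.descFactorial_zero, Nat.mul_one]
    rw [Nat.descFactorial_self, Nat.descFactorial_self]
    obtain ⟨t, ht⟩ : ∃ t, q + s = t + 1 := ⟨q + s - 1, by omega⟩
    rw [ht]
    simp only [Nat.add_sub_cancel]
    rw [Nat.factorial_succ, ← Nat.add_mul, ht]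
  | succ k₂ =>
    rw [if_pos (by omega)]
    rw [show k₂ + 1 + 1 = k₂ + 2 from rfl, FB_step (q+s) k₂ c]
    have hFB : s * FB (q+s-1) (k₂+2) c = s * FG (q+s) (k₂+1) c := by
      rcases Nat.eq_zero_or_pos s with hs | hs
      · subst hs; simp
      · obtain ⟨h₁, hh⟩ : ∃ h₁, q + s = h₁ + 1 := ⟨q + s - 1, by omega⟩
        rw [hh, Nat.add_sub_cancel, FG_eq_FB]
    rw [show (k₂ + 1 + 1) = k₂ + 2 from rfl, hFB]
    ring

lemma FB_congr {a b c a' b' c' : ℕ} (h1 : a = a') (h2 : b = b') (h3 : c = c') :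
    FB a b c = FB a' b' c' := by rw [h1, h2, h3]

lemma FG_congr {a b c a' b' c' : ℕ} (h1 : a = a') (h2 : b = b') (h3 : c = c') :
    FG a b c = FG a' b' c' := by rw [h1, h2, h3]

section Erase

variable {R : ℕ} {f₀ : Fin (R+1) ↪ V} {Q : Finset (V×V)} {v w₂ : V}

lemma tails_erase (hQ : Q ⊆ pedges f₀) (hvw : (v, w₂) ∈ Q) :
    tails (Q.erase (v, w₂)) = (tails Q).erase v := by
  ext x
  rw [mem_tails, Finset.mem_erase, mem_tails]
  constructor
  · rintro ⟨y, hy⟩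
    rcases Finset.mem_erase.1 hy with ⟨hne, hyQ⟩
    refine ⟨?_, ⟨y, hyQ⟩⟩
    rintro rfl
    exact hne (by rw [out_unique hQ hyQ hvw])
  · rintro ⟨hne, y, hy⟩
    exact ⟨y, Finset.mem_erase.2 ⟨fun h => hne (congrArg Prod.fst h), hy⟩⟩

lemma heads_erase (hQ : Q ⊆ pedges f₀) (hvw : (v, w₂) ∈ Q) :
    heads (Q.erase (v, w₂)) = (heads Q).erase w₂ := by
  ext x
  rw [mem_heads, Finset.mem_erase, mem_heads]
  constructor
  · rintro ⟨y, hy⟩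
    rcases Finset.mem_erase.1 hy with ⟨hne, hyQ⟩
    refine ⟨?_, ⟨y, hyQ⟩⟩
    rintro rfl
    exact hne (by rw [in_unique hQ hyQ hvw])
  · rintro ⟨hne, y, hy⟩
    exact ⟨y, Finset.mem_erase.2 ⟨fun h => hne (congrArg Prod.snd h), hy⟩⟩

lemma traceVerts_mono {Q' : Finset (V×V)} (h : Q' ⊆ Q) :
    traceVerts Q' ⊆ traceVerts Q :=
  Finset.union_subset_union (Finset.image_subset_image h) (Finset.image_subset_image h)

lemma traceVerts_erase_case1 (hQ : Q ⊆ pedges f₀) (hvw : (v, w₂) ∈ Q)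
    (hvH : v ∉ heads Q) (hw₂t : w₂ ∈ tails Q) :
    traceVerts (Q.erase (v, w₂)) = (traceVerts Q).erase v := by
  rw [traceVerts, tails_erase hQ hvw, heads_erase hQ hvw, traceVerts]
  ext x
  simp only [Finset.mem_union, Finset.mem_erase]
  constructor
  · rintro (⟨h1, h2⟩ | ⟨h1, h2⟩)
    · exact ⟨h1, Or.inl h2⟩
    · exact ⟨fun hxv => hvH (hxv ▸ h2), Or.inr h2⟩
  · rintro ⟨h1, h2 | h2⟩
    · exact Or.inl ⟨h1, h2⟩
    · by_cases hx : x = w₂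
      · exact Or.inl ⟨h1, hx ▸ hw₂t⟩
      · exact Or.inr ⟨hx, h2⟩

lemma sdiff_erase_case1 (hQ : Q ⊆ pedges f₀) (hvw : (v, w₂) ∈ Q)
    (hvH : v ∉ heads Q) (hw₂t : w₂ ∈ tails Q) :
    tails (Q.erase (v, w₂)) \ heads (Q.erase (v, w₂))
      = insert w₂ ((tails Q \ heads Q).erase v) := by
  rw [tails_erase hQ hvw, heads_erase hQ hvw]
  ext x
  simp only [Finset.mem_sdiff, Finset.mem_erase, Finset.mem_insert, not_and]
  constructor
  · rintro ⟨⟨h1, h2⟩, h3⟩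
    by_cases hx : x = w₂
    · exact Or.inl hx
    · exact Or.inr ⟨h1, h2, fun hh => (h3 fun hxx => absurd hxx hx) hh⟩
  · rintro (rfl | ⟨h1, h2, h3⟩)
    · have hne : x ≠ v := fun h => hvH (h ▸ mem_heads.2 ⟨v, hvw⟩)
      exact ⟨⟨hne, hw₂t⟩, fun h hh => absurd rfl h⟩
    · exact ⟨⟨h1, h2⟩, fun _ hh => h3 hh⟩

lemma traceVerts_erase_case2 (hQ : Q ⊆ pedges f₀) (hvw : (v, w₂) ∈ Q)
    (hvH : v ∉ heads Q) (hw₂t : w₂ ∉ tails Q) :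
    traceVerts (Q.erase (v, w₂)) = ((traceVerts Q).erase v).erase w₂ := by
  rw [traceVerts, tails_erase hQ hvw, heads_erase hQ hvw, traceVerts]
  ext x
  simp only [Finset.mem_union, Finset.mem_erase]
  constructor
  · rintro (⟨h1, h2⟩ | ⟨h1, h2⟩)
    · exact ⟨fun hx => hw₂t (hx ▸ h2), h1, Or.inl h2⟩
    · exact ⟨h1, fun hxv => hvH (hxv ▸ h2), Or.inr h2⟩
  · rintro ⟨h1, h2, h3 | h3⟩
    · exact Or.inl ⟨h2, h3⟩
    · exact Or.inr ⟨h1, h3⟩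

lemma sdiff_erase_case2 (hQ : Q ⊆ pedges f₀) (hvw : (v, w₂) ∈ Q)
    (hw₂t : w₂ ∉ tails Q) :
    tails (Q.erase (v, w₂)) \ heads (Q.erase (v, w₂))
      = (tails Q \ heads Q).erase v := by
  rw [tails_erase hQ hvw, heads_erase hQ hvw]
  ext x
  simp only [Finset.mem_sdiff, Finset.mem_erase, not_and]
  constructor
  · rintro ⟨⟨h1, h2⟩, h3⟩
    refine ⟨h1, h2, ?_⟩
    intro hxh
    have hx : x ≠ w₂ := fun h => hw₂t (h ▸ h2)
    exact (h3 fun hxx => absurd hxx hx) hxh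
  · rintro ⟨h1, h2, h3⟩
    exact ⟨⟨h1, h2⟩, fun _ hh => h3 hh⟩

end Erase

lemma main (R : ℕ) (f₀ : Fin (R+1) ↪ V) (m : ℕ) :
    ∀ (A : Finset V) (Q : Finset (V×V)) (S : Finset V),
      Q ⊆ pedges f₀ → traceVerts Q ⊆ A → S ⊆ A → (∀ x ∈ S, x ∉ traceVerts Q) →
      m + 1 ≤ A.card →
      ((∀ v, v ∈ A → v ∉ traceVerts Q → v ∉ S →
          cnt m A Q S v =
            if (traceVerts Q).card + S.card + 1 ≤ m + 1 then
              FB ((tails Q \ heads Q).card + S.card)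
                 ((m+1) - ((traceVerts Q).card + S.card)) (A.card - (m+1))
            else 0) ∧
        (∀ v w₂, (v, w₂) ∈ Q → v ∉ heads Q →
          (traceVerts Q).card + S.card ≤ m + 1 →
          cnt m A Q S v =
            FG ((tails Q \ heads Q).card + S.card)
               ((m+1) - ((traceVerts Q).card + S.card)) (A.card - (m+1)))) := by
  induction m with
  | zero =>
    intro A Q S hQ hTA hSA hST hmA
    constructor
    · intro v hvA hvT hvS
      by_cases hcond : (traceVerts Q).card + S.card + 1 ≤ 0 + 1
      · rw [if_pos hcond]
        have ht0 : (traceVerts Q).card = 0 := by omega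
        have hs0 : S.card = 0 := by omega
        have hQe : Q = ∅ := by
          rcases Finset.eq_empty_or_nonempty Q with h | h
          · exact h
          · exfalso
            rcases h with ⟨e, he⟩
            have hmem : e.1 ∈ traceVerts Q :=
              Finset.mem_union_left _ (mem_tails.2 ⟨e.2, by
                rwa [show (e.1, e.2) = e from rfl]⟩)
            have := Finset.card_pos.2 ⟨e.1, hmem⟩
            omega
        have hSe : S = ∅ := Finset.card_eq_zero.1 hs0
        subst hQe hSe
        rw [cnt]
        have hfe : (Finset.univ.filter fun f : Fin 1 ↪ V =>
            rngF f ⊆ A ∧ (∅ : Finset (V×V)) ⊆ pedges f ∧ (∅ : Finset V) ⊆ rngF f ∧ f 0 = v)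
            = {⟨fun _ => v, fun a b _ => Subsingleton.elim a b⟩} := by
          ext f
          simp only [Finset.mem_filter, Finset.mem_singleton, Finset.mem_univ, true_and]
          constructor
          · rintro ⟨h1, -, -, h4⟩
            apply DFunLike.ext
            intro i
            rw [Subsingleton.elim i 0, h4]
            rfl
          · rintro rfl
            refine ⟨?_, Finset.empty_subset _, Finset.empty_subset _, rfl⟩
            intro x hx
            rcases mem_rngF.1 hx with ⟨i, rfl⟩
            exact hvA
        rw [hfe, Finset.card_singleton]
        simp [tails, heads, traceVerts, FB]
      · rw [if_neg hcond]
        exact cnt_zero _ _ _ _ _ hvT hvS hST (by omega)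
    · intro v w₂ hvw hvH hts
      exfalso
      have hvT : v ∈ traceVerts Q := Finset.mem_union_left _ (mem_tails.2 ⟨w₂, hvw⟩)
      have hwT : w₂ ∈ traceVerts Q := Finset.mem_union_right _ (mem_heads.2 ⟨v, hvw⟩)
      have hne : v ≠ w₂ := no_loop hQ hvw
      have h2 : 1 < (traceVerts Q).card := Finset.one_lt_card.2 ⟨v, hvT, w₂, hwT, hne⟩
      omega
  | succ m IH =>
    intro A Q S hQ hTA hSA hST hmA
    constructor
    -- BLACK case
    · intro v hvA hvT hvS
      by_cases hcond : (traceVerts Q).card + S.card + 1 ≤ m + 1 + 1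
      swap
      · rw [if_neg hcond]
        exact cnt_zero _ _ _ _ _ hvT hvS hST (by omega)
      rw [if_pos hcond]
      have hvt : v ∉ tails Q := fun h => hvT (Finset.mem_union_left _ h)
      have hA'card : (A.erase v).card = A.card - 1 := Finset.card_erase_of_mem hvA
      have hTA' : traceVerts Q ⊆ A.erase v := fun x hx =>
        Finset.mem_erase.2 ⟨fun h => hvT (h ▸ hx), hTA hx⟩
      have hSA' : S ⊆ A.erase v := fun x hx =>
        Finset.mem_erase.2 ⟨fun h => hvS (h ▸ hx), hSA hx⟩
      have hmA' : m + 1 ≤ (A.erase v).card := by omega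
      obtain ⟨IH1, IH2⟩ := IH (A.erase v) Q S hQ hTA' hSA' hST hmA'
      -- fiberwise decomposition
      have hmap : ∀ f ∈ (Finset.univ.filter fun f : Fin (m+2) ↪ V =>
          rngF f ⊆ A ∧ Q ⊆ pedges f ∧ S ⊆ rngF f ∧ f 0 = v), f 1 ∈ A.erase v := by
        rintro f hf
        rcases Finset.mem_filter.1 hf with ⟨-, hA, -, -, h0⟩
        refine Finset.mem_erase.2 ⟨?_, hA (mem_rngF.2 ⟨1, rfl⟩)⟩
        intro h
        have h10 : (1 : Fin (m+2)) = 0 := f.injective (by rw [h, h0])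
        rw [Fin.one_eq_zero_iff] at h10
        omega
      rw [cnt, Finset.card_eq_sum_card_fiberwise hmap]
      simp only [Finset.filter_filter]
      rw [Finset.sum_congr rfl (fun w _ => step_w m A Q S v w hvA hvt hvS)]
      -- partition
      have hdisj12 : Disjoint (heads Q) (tails Q \ heads Q) :=
        Finset.disjoint_right.2 fun x hx => (Finset.mem_sdiff.1 hx).2
      have hdisj3 : Disjoint (heads Q ∪ (tails Q \ heads Q)) S := by
        apply Finset.disjoint_right.2
        intro x hx hmem
        rcases Finset.mem_union.1 hmem with h | h
        · exact hST x hx (Finset.mem_union_right _ h)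
        · exact hST x hx (Finset.mem_union_left _ (Finset.mem_sdiff.1 h).1)
      have hdisj4 : Disjoint (heads Q ∪ (tails Q \ heads Q) ∪ S)
          (A.erase v \ (traceVerts Q ∪ S)) := by
        apply Finset.disjoint_right.2
        intro x hx hmem
        rcases Finset.mem_sdiff.1 hx with ⟨-, hnot⟩
        apply hnot
        rcases Finset.mem_union.1 hmem with h | h
        · rcases Finset.mem_union.1 h with h | h
          · exact Finset.mem_union_left _ (Finset.mem_union_right _ h)
          · exact Finset.mem_union_left _ (Finset.mem_union_left _ (Finset.mem_sdiff.1 h).1)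
        · exact Finset.mem_union_right _ h
      have hsplit : A.erase v = (heads Q ∪ (tails Q \ heads Q) ∪ S)
          ∪ (A.erase v \ (traceVerts Q ∪ S)) := by
        ext x
        constructor
        · intro hx
          by_cases h1 : x ∈ traceVerts Q
          · rcases Finset.mem_union.1 h1 with h | h
            · by_cases h2 : x ∈ heads Q
              · exact Finset.mem_union_left _ (Finset.mem_union_left _ (Finset.mem_union_left _ h2))
              · exact Finset.mem_union_left _ (Finset.mem_union_left _
                  (Finset.mem_union_right _ (Finset.mem_sdiff.2 ⟨h, h2⟩)))
            · exact Finset.mem_union_left _ (Finset.mem_union_left _ (Finset.mem_union_left _ h))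
          · by_cases h2 : x ∈ S
            · exact Finset.mem_union_left _ (Finset.mem_union_right _ h2)
            · refine Finset.mem_union_right _ (Finset.mem_sdiff.2 ⟨hx, ?_⟩)
              intro hmem
              rcases Finset.mem_union.1 hmem with h | h
              · exact h1 h
              · exact h2 h
        · intro hx
          rcases Finset.mem_union.1 hx with h | h
          · rcases Finset.mem_union.1 h with h | h
            · rcases Finset.mem_union.1 h with h | h
              · exact hTA' (Finset.mem_union_right _ h)
              · exact hTA' (Finset.mem_union_left _ (Finset.mem_sdiff.1 h).1)
            · exact hSA' h
          · exact (Finset.mem_sdiff.1 h).1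
      rw [Finset.sum_congr hsplit (fun _ _ => rfl), Finset.sum_union hdisj4,
        Finset.sum_union hdisj3, Finset.sum_union hdisj12]
      -- evaluate the four sums
      have hs_heads : ∑ w ∈ heads Q, cnt m (A.erase v) Q S w = 0 :=
        Finset.sum_eq_zero fun w hw => cnt_head_zero _ _ _ _ _ hw
      have hs_gray : ∑ w ∈ tails Q \ heads Q, cnt m (A.erase v) Q S w
          = (tails Q \ heads Q).card
            * FG ((tails Q \ heads Q).card + S.card)
                ((m+1) - ((traceVerts Q).card + S.card)) (A.card - (m+2)) := by
        rw [Finset.sum_congr rfl (fun w hw => ?_), Finset.sum_const, smul_eq_mul]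
        rcases Finset.mem_sdiff.1 hw with ⟨hwt, hwh⟩
        rcases mem_tails.1 hwt with ⟨w₃, hw₃⟩
        rw [IH2 w w₃ hw₃ hwh (by omega)]
        exact FG_congr rfl rfl (by omega)
      have hs_S : ∑ w ∈ S, cnt m (A.erase v) Q S w
          = S.card * FB ((tails Q \ heads Q).card + S.card - 1)
              ((m+1) - ((traceVerts Q).card + S.card) + 1) (A.card - (m+2)) := by
        rw [Finset.sum_congr rfl (fun w hw => ?_), Finset.sum_const, smul_eq_mul]
        have hs1 : 1 ≤ S.card := Finset.card_pos.2 ⟨w, hw⟩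
        rw [cnt_S_erase m (A.erase v) Q S w hw]
        have hSA'' : S.erase w ⊆ A.erase v := (Finset.erase_subset _ _).trans hSA'
        have hST'' : ∀ x ∈ S.erase w, x ∉ traceVerts Q :=
          fun x hx => hST x (Finset.mem_of_mem_erase hx)
        obtain ⟨IH1', -⟩ := IH (A.erase v) Q (S.erase w) hQ hTA' hSA'' hST'' hmA'
        rw [IH1' w (hSA' hw) (hST w hw) (fun h => (Finset.mem_erase.1 h).1 rfl)]
        rw [Finset.card_erase_of_mem hw]
        rw [if_pos (by omega)]
        exact FB_congr (by omega) (by omega) (by omega)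
      have hs_rest : ∑ w ∈ A.erase v \ (traceVerts Q ∪ S), cnt m (A.erase v) Q S w
          = ((A.card - (m+2)) + ((m+1) - ((traceVerts Q).card + S.card)))
            * (if 1 ≤ (m+1) - ((traceVerts Q).card + S.card) then
                FB ((tails Q \ heads Q).card + S.card)
                  ((m+1) - ((traceVerts Q).card + S.card)) (A.card - (m+2))
              else 0) := by
        have hcardrest : (A.erase v \ (traceVerts Q ∪ S)).card
            = (A.card - (m+2)) + ((m+1) - ((traceVerts Q).card + S.card)) := by
          rw [Finset.card_sdiff_of_subset (Finset.union_subset hTA' hSA'),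
            Finset.card_union_of_disjoint
              (Finset.disjoint_right.2 fun a ha => hST a ha), hA'card]
          omega
        rw [Finset.sum_congr rfl (fun w hw => ?_), Finset.sum_const, smul_eq_mul, hcardrest]
        rcases Finset.mem_sdiff.1 hw with ⟨hwA, hwnot⟩
        have hwT : w ∉ traceVerts Q := fun h => hwnot (Finset.mem_union_left _ h)
        have hwS : w ∉ S := fun h => hwnot (Finset.mem_union_right _ h)
        rw [IH1 w hwA hwT hwS, hA'card,
          show A.card - 1 - (m+1) = A.card - (m+2) from by omega]
        exact if_congr (by omega) rfl rfl
      rw [hs_heads, hs_gray, hs_S, hs_rest]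
      -- final arithmetic
      have hkey := key_FB ((tails Q \ heads Q).card) S.card (A.card - (m+2))
        ((m+1) - ((traceVerts Q).card + S.card))
        (by
          intro h0
          rcases Nat.eq_zero_or_pos S.card with hs | hs
          · have ht1 : 1 ≤ (traceVerts Q).card := by omega
            have hQne : Q.Nonempty := by
              rcases Finset.eq_empty_or_nonempty Q with h | h
              · exfalso
                rw [h] at ht1
                simp [traceVerts, tails, heads] at ht1
              · exact h
            obtain ⟨x, hxt, hxh⟩ := exists_start hQ hQne
            have : 1 ≤ (tails Q \ heads Q).card :=
              Finset.card_pos.2 ⟨x, Finset.mem_sdiff.2 ⟨hxt, hxh⟩⟩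
            omega
          · omega)
      rw [show (m + 1 + 1) - ((traceVerts Q).card + S.card)
          = ((m+1) - ((traceVerts Q).card + S.card)) + 1 from by omega,
        show A.card - (m + 1 + 1) = A.card - (m+2) from rfl]
      rw [hkey]
      ring
    -- GRAY case
    · intro v w₂ hvw hvH hts
      have hvt : v ∈ tails Q := mem_tails.2 ⟨w₂, hvw⟩
      have hvT : v ∈ traceVerts Q := Finset.mem_union_left _ hvt
      have hvA : v ∈ A := hTA hvT
      have hvS : v ∉ S := fun h => hST v h hvT
      have hw₂h : w₂ ∈ heads Q := mem_heads.2 ⟨v, hvw⟩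
      have hw₂T : w₂ ∈ traceVerts Q := Finset.mem_union_right _ hw₂h
      have hvw₂ : v ≠ w₂ := no_loop hQ hvw
      have hA'card : (A.erase v).card = A.card - 1 := Finset.card_erase_of_mem hvA
      have hQ' : Q.erase (v, w₂) ⊆ pedges f₀ := (Finset.erase_subset _ _).trans hQ
      have htails' := tails_erase hQ hvw
      have hheads' := heads_erase hQ hvw
      have hTA'' : traceVerts (Q.erase (v, w₂)) ⊆ A.erase v := by
        intro x hx
        rcases Finset.mem_union.1 hx with hx | hx
        · rw [htails'] at hx
          rcases Finset.mem_erase.1 hx with ⟨hne, hxt⟩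
          exact Finset.mem_erase.2 ⟨hne, hTA (Finset.mem_union_left _ hxt)⟩
        · rw [hheads'] at hx
          have hxh := Finset.mem_of_mem_erase hx
          exact Finset.mem_erase.2 ⟨fun h => hvH (h ▸ hxh),
            hTA (Finset.mem_union_right _ hxh)⟩
      have hSA' : S ⊆ A.erase v := fun x hx =>
        Finset.mem_erase.2 ⟨fun h => hvS (h ▸ hx), hSA hx⟩
      have hST'' : ∀ x ∈ S, x ∉ traceVerts (Q.erase (v, w₂)) :=
        fun x hx h => hST x hx (traceVerts_mono (Finset.erase_subset _ _) h)
      have hmA' : m + 1 ≤ (A.erase v).card := by omega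
      have ht2 : 2 ≤ (traceVerts Q).card := Finset.one_lt_card.2 ⟨v, hvT, w₂, hw₂T, hvw₂⟩
      have hhq1 : 1 ≤ (tails Q \ heads Q).card :=
        Finset.card_pos.2 ⟨v, Finset.mem_sdiff.2 ⟨hvt, hvH⟩⟩
      rw [step_gray m A Q S v w₂ hvA hvS hvw]
      obtain ⟨IH1, IH2⟩ := IH (A.erase v) (Q.erase (v, w₂)) S hQ' hTA'' hSA' hST'' hmA'
      by_cases hw₂t : w₂ ∈ tails Q
      · -- case (i): segment continues
        have htv' := traceVerts_erase_case1 hQ hvw hvH hw₂t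
        have hsd' := sdiff_erase_case1 hQ hvw hvH hw₂t
        have hw₂t' : w₂ ∈ tails (Q.erase (v, w₂)) := by
          rw [htails']
          exact Finset.mem_erase.2 ⟨fun h => hvw₂ h.symm, hw₂t⟩
        rcases mem_tails.1 hw₂t' with ⟨w₃, hw₃⟩
        have hw₂h' : w₂ ∉ heads (Q.erase (v, w₂)) := by
          rw [hheads']
          exact fun h => (Finset.mem_erase.1 h).1 rfl
        have htv'card : (traceVerts (Q.erase (v, w₂))).card = (traceVerts Q).card - 1 := by
          rw [htv', Finset.card_erase_of_mem hvT]
        have hsd'card : (tails (Q.erase (v, w₂)) \ heads (Q.erase (v, w₂))).card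
            = (tails Q \ heads Q).card := by
          rw [hsd', Finset.card_insert_of_notMem (fun h =>
              (Finset.mem_sdiff.1 (Finset.mem_of_mem_erase h)).2 hw₂h),
            Finset.card_erase_of_mem (Finset.mem_sdiff.2 ⟨hvt, hvH⟩)]
          omega
        rw [IH2 w₂ w₃ hw₃ hw₂h' (by rw [htv'card]; omega)]
        rw [hsd'card, htv'card, hA'card]
        exact FG_congr rfl (by omega) (by omega)
      · -- case (ii): segment ends, w₂ becomes black
        have htv'' := traceVerts_erase_case2 hQ hvw hvH hw₂t
        have hsd'' := sdiff_erase_case2 hQ hvw hw₂t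
        have hw₂A : w₂ ∈ A.erase v :=
          Finset.mem_erase.2 ⟨fun h => hvw₂ h.symm, hTA hw₂T⟩
        have hw₂T'' : w₂ ∉ traceVerts (Q.erase (v, w₂)) := by
          rw [htv'']
          exact fun h => (Finset.mem_erase.1 h).1 rfl
        have hw₂S : w₂ ∉ S := fun h => hST w₂ h hw₂T
        have htv''card : (traceVerts (Q.erase (v, w₂))).card = (traceVerts Q).card - 2 := by
          rw [htv'', Finset.card_erase_of_mem
            (Finset.mem_erase.2 ⟨fun h => hvw₂ h.symm, hw₂T⟩),
            Finset.card_erase_of_mem hvT]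
          omega
        have hsd''card : (tails (Q.erase (v, w₂)) \ heads (Q.erase (v, w₂))).card
            = (tails Q \ heads Q).card - 1 := by
          rw [hsd'', Finset.card_erase_of_mem (Finset.mem_sdiff.2 ⟨hvt, hvH⟩)]
        rw [IH1 w₂ hw₂A hw₂T'' hw₂S]
        rw [htv''card, hsd''card, hA'card]
        rw [if_pos (by omega)]
        obtain ⟨h₁, hh⟩ : ∃ h₁, (tails Q \ heads Q).card + S.card = h₁ + 1 :=
          ⟨(tails Q \ heads Q).card + S.card - 1, by omega⟩
        rw [hh, FG_eq_FB]
        exact (FB_congr (by omega) (by omega) (by omega)).symm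

def frev {m : ℕ} (f : Fin (m+1) ↪ V) : Fin (m+1) ↪ V :=
  (Fin.revPerm.toEmbedding).trans f

@[simp] lemma frev_apply {m : ℕ} (f : Fin (m+1) ↪ V) (i : Fin (m+1)) :
    frev f i = f i.rev := rfl

lemma frev_frev {m : ℕ} (f : Fin (m+1) ↪ V) : frev (frev f) = f := by
  apply DFunLike.ext
  intro i
  show f i.rev.rev = f i
  rw [Fin.rev_rev]

lemma pedges_frev {L : ℕ} (f : Fin (L+1) ↪ V) :
    pedges (frev f) = (pedges f).image Prod.swap := by
  ext p
  rw [mem_pedges, Finset.mem_image]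
  constructor
  · rintro ⟨i, h1, h2⟩
    have h1' : f (i.castSucc.rev) = p.1 := h1
    have h2' : f (i.succ.rev) = p.2 := h2
    rw [Fin.rev_castSucc] at h1'
    rw [Fin.rev_succ] at h2'
    refine ⟨(f i.rev.castSucc, f i.rev.succ), mem_pedges.2 ⟨i.rev, rfl, rfl⟩, ?_⟩
    exact Prod.ext_iff.2 ⟨h1', h2'⟩
  · rintro ⟨q, hq, rfl⟩
    rcases mem_pedges.1 hq with ⟨i, h1, h2⟩
    refine ⟨i.rev, ?_, ?_⟩
    · show f ((i.rev.castSucc).rev) = (Prod.swap q).1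
      rw [Fin.rev_castSucc, Fin.rev_rev]
      exact h2
    · show f ((i.rev.succ).rev) = (Prod.swap q).2
      rw [Fin.rev_succ, Fin.rev_rev]
      exact h1

lemma tails_swap (Q : Finset (V×V)) : tails (Q.image Prod.swap) = heads Q := by
  ext x
  rw [mem_tails, mem_heads]
  constructor
  · rintro ⟨y, hy⟩
    rcases Finset.mem_image.1 hy with ⟨e, he, hswap⟩
    refine ⟨y, ?_⟩
    have : e = (y, x) := by
      rw [← Prod.swap_swap e, hswap]; rfl
    rwa [← this]
  · rintro ⟨y, hy⟩
    exact ⟨y, Finset.mem_image.2 ⟨(y, x), hy, rfl⟩⟩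

lemma heads_swap (Q : Finset (V×V)) : heads (Q.image Prod.swap) = tails Q := by
  ext x
  rw [mem_heads, mem_tails]
  constructor
  · rintro ⟨y, hy⟩
    rcases Finset.mem_image.1 hy with ⟨e, he, hswap⟩
    refine ⟨y, ?_⟩
    have : e = (x, y) := by
      rw [← Prod.swap_swap e, hswap]; rfl
    rwa [← this]
  · rintro ⟨y, hy⟩
    exact ⟨y, Finset.mem_image.2 ⟨(x, y), hy, rfl⟩⟩

lemma traceVerts_swap (Q : Finset (V×V)) :
    traceVerts (Q.image Prod.swap) = traceVerts Q := by
  rw [traceVerts, tails_swap, heads_swap, traceVerts, Finset.union_comm]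

lemma card_last (L : ℕ) (Q : Finset (V×V)) (v : V) :
    (Finset.univ.filter fun f : Fin (L+1) ↪ V =>
      Q ⊆ pedges f ∧ f (Fin.last L) = v).card
    = (Finset.univ.filter fun f : Fin (L+1) ↪ V =>
      (Q.image Prod.swap) ⊆ pedges f ∧ f 0 = v).card := by
  apply Finset.card_nbij' (i := frev) (j := frev)
  · intro f hf
    rcases Finset.mem_filter.1 hf with ⟨-, h1, h2⟩
    refine Finset.mem_filter.2 ⟨Finset.mem_univ _, ?_, ?_⟩
    · rw [pedges_frev]
      exact Finset.image_subset_image h1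
    · show f ((0 : Fin (L+1)).rev) = v
      rw [Fin.rev_zero]
      exact h2
  · intro g hg
    rcases Finset.mem_filter.1 hg with ⟨-, h1, h2⟩
    refine Finset.mem_filter.2 ⟨Finset.mem_univ _, ?_, ?_⟩
    · rw [pedges_frev]
      have : Q = (Q.image Prod.swap).image Prod.swap := by
        rw [Finset.image_image]
        simp
      rw [this]
      exact Finset.image_subset_image h1
    · show g ((Fin.last L).rev) = v
      rw [Fin.rev_last]
      exact h2
  · intro f _; exact frev_frev f
  · intro g _; exact frev_frev g

end CEB

/-- Counting paths extending a trace, black node case: with the same setup as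
the gray-node lemma, if `v` is a black node (incident to no revealed edge) then
the number of directed simple paths of length `L` in `K_n` containing `Q` with
`v` as an endpoint equals 2·(h+k−1)!·(n−λ+k−1)! / ((k−1)!·(n−λ)!) when k ≥ 1,
and equals 0 when k = 0. -/
theorem count_extensions_black
    {V : Type} [Fintype V] [DecidableEq V]
    (n L h k : ℕ) (hn : n = Fintype.card V)
    (Q : Finset (V × V)) (hQne : Q.Nonempty)
    (f₀ : Fin (L + 1) ↪ V) (hf₀ : Q ⊆ pedges f₀)
    (hh : h = (tails Q \ heads Q).card)
    (hk : k = (L + 1) - (traceVerts Q).card)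
    (v : V) (hv : v ∉ traceVerts Q) :
    (1 ≤ k →
      ((Finset.univ.filter (fun f : Fin (L + 1) ↪ V =>
          Q ⊆ pedges f ∧ (f 0 = v ∨ f (Fin.last L) = v))).card : ℚ)
        = (2 * Nat.factorial (h + k - 1) * Nat.factorial (n - (L + 1) + k - 1) : ℚ)
          / (Nat.factorial (k - 1) * Nat.factorial (n - (L + 1)) : ℚ)) ∧
    (k = 0 →
      (Finset.univ.filter (fun f : Fin (L + 1) ↪ V =>
          Q ⊆ pedges f ∧ (f 0 = v ∨ f (Fin.last L) = v))).card = 0) := by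
  classical
  have hL : L ≠ 0 := by
    rintro rfl
    obtain ⟨e, he⟩ := hQne
    have := hf₀ he
    simp [pedges] at this
  -- split the filter
  have hsplit2 : (Finset.univ.filter (fun f : Fin (L + 1) ↪ V =>
        Q ⊆ pedges f ∧ (f 0 = v ∨ f (Fin.last L) = v)))
      = (Finset.univ.filter fun f : Fin (L+1) ↪ V => Q ⊆ pedges f ∧ f 0 = v)
        ∪ (Finset.univ.filter fun f : Fin (L+1) ↪ V => Q ⊆ pedges f ∧ f (Fin.last L) = v) := by
    ext f
    simp only [Finset.mem_filter, Finset.mem_union, Finset.mem_univ, true_and]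
    tauto
  have hdisj : Disjoint
      (Finset.univ.filter fun f : Fin (L+1) ↪ V => Q ⊆ pedges f ∧ f 0 = v)
      (Finset.univ.filter fun f : Fin (L+1) ↪ V => Q ⊆ pedges f ∧ f (Fin.last L) = v) := by
    apply Finset.disjoint_left.2
    intro f hf1 hf2
    rcases Finset.mem_filter.1 hf1 with ⟨-, -, h1⟩
    rcases Finset.mem_filter.1 hf2 with ⟨-, -, h2⟩
    have h0 : (0 : Fin (L+1)) = Fin.last L := f.injective (h1.trans h2.symm)
    have := congrArg Fin.val h0
    simp [Fin.val_last] at this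
    exact hL this.symm
  have hc1 : (Finset.univ.filter fun f : Fin (L+1) ↪ V => Q ⊆ pedges f ∧ f 0 = v).card
      = CEB.cnt L Finset.univ Q ∅ v := by
    rw [CEB.cnt]
    apply congrArg Finset.card
    apply Finset.filter_congr
    intro f _
    constructor
    · rintro ⟨h1, h2⟩
      exact ⟨Finset.subset_univ _, h1, Finset.empty_subset _, h2⟩
    · rintro ⟨-, h1, -, h2⟩
      exact ⟨h1, h2⟩
  have hc2 : (Finset.univ.filter fun f : Fin (L+1) ↪ V =>
        Q ⊆ pedges f ∧ f (Fin.last L) = v).card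
      = CEB.cnt L Finset.univ (Q.image Prod.swap) ∅ v := by
    rw [CEB.card_last, CEB.cnt]
    apply congrArg Finset.card
    apply Finset.filter_congr
    intro f _
    constructor
    · rintro ⟨h1, h2⟩
      exact ⟨Finset.subset_univ _, h1, Finset.empty_subset _, h2⟩
    · rintro ⟨-, h1, -, h2⟩
      exact ⟨h1, h2⟩
  have hcardV : L + 1 ≤ (Finset.univ : Finset V).card := by
    have := Fintype.card_le_of_embedding f₀
    rwa [Fintype.card_fin, ← Finset.card_univ] at this
  have hST0 : ∀ x ∈ (∅ : Finset V), x ∉ traceVerts Q := by simp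
  obtain ⟨M1, -⟩ := CEB.main L f₀ L Finset.univ Q ∅ hf₀ (Finset.subset_univ _)
    (Finset.subset_univ _) hST0 hcardV
  have hB1 := M1 v (Finset.mem_univ v) hv (by simp)
  -- swapped version
  have hf₀s : Q.image Prod.swap ⊆ pedges (CEB.frev f₀) := by
    rw [CEB.pedges_frev]
    exact Finset.image_subset_image hf₀
  have hvs : v ∉ traceVerts (Q.image Prod.swap) := by
    rwa [CEB.traceVerts_swap]
  have hST0' : ∀ x ∈ (∅ : Finset V), x ∉ traceVerts (Q.image Prod.swap) := by simp
  obtain ⟨M2, -⟩ := CEB.main L (CEB.frev f₀) L Finset.univ (Q.image Prod.swap) ∅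
    hf₀s (Finset.subset_univ _) (Finset.subset_univ _) hST0' hcardV
  have hB2 := M2 v (Finset.mem_univ v) hvs (by simp)
  rw [CEB.traceVerts_swap, CEB.tails_swap, CEB.heads_swap,
    CEB.card_sdiff_symm hf₀] at hB2
  simp only [Finset.card_empty, Nat.add_zero] at hB1 hB2
  constructor
  · -- k ≥ 1
    intro hk1
    have htle : (traceVerts Q).card + 1 ≤ L + 1 := by omega
    rw [hsplit2, Finset.card_union_of_disjoint hdisj, hc1, hc2, hB1, hB2]
    simp only [htle, ↓reduceIte]
    -- numeric finish
    obtain ⟨k₁, hkk⟩ : ∃ k₁, k = k₁ + 1 := ⟨k - 1, by omega⟩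
    have hqh : (tails Q \ heads Q).card = h := hh.symm
    have huniv : (Finset.univ : Finset V).card = n := by
      rw [Finset.card_univ, hn]
    have hKk : (L + 1) - (traceVerts Q).card = k₁ + 1 := by omega
    have hKc : (Finset.univ : Finset V).card - (L + 1) = n - (L + 1) := by
      rw [huniv]
    rw [hqh, hKk, hKc]
    have hFB : CEB.FB h (k₁ + 1) (n - (L+1))
        = (h + k₁).descFactorial h * ((n - (L+1)) + k₁).descFactorial k₁ := by
      rw [CEB.FB, show h + (k₁+1) - 1 = h + k₁ from by omega,
        show (n - (L+1)) + (k₁+1) - 1 = (n - (L+1)) + k₁ from by omega,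
        show k₁ + 1 - 1 = k₁ from rfl]
    have f1 : k₁.factorial * (h + k₁).descFactorial h = (h + k₁).factorial := by
      have := Nat.factorial_mul_descFactorial (show h ≤ h + k₁ from by omega)
      rwa [show h + k₁ - h = k₁ from by omega] at this
    have f2 : (n - (L+1)).factorial * ((n - (L+1)) + k₁).descFactorial k₁
        = ((n - (L+1)) + k₁).factorial := by
      have := Nat.factorial_mul_descFactorial
        (show k₁ ≤ (n - (L+1)) + k₁ from by omega)
      rwa [show (n - (L+1)) + k₁ - k₁ = (n - (L+1)) from by omega] at this
    rw [hFB]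
    rw [show h + k - 1 = h + k₁ from by omega,
      show n - (L+1) + k - 1 = (n - (L+1)) + k₁ from by omega,
      show k - 1 = k₁ from by omega]
    have hne1 : ((k₁.factorial : ℚ)) ≠ 0 := by
      exact_mod_cast k₁.factorial_ne_zero
    have hne2 : (((n - (L+1)).factorial : ℚ)) ≠ 0 := by
      exact_mod_cast (n - (L+1)).factorial_ne_zero
    rw [eq_div_iff (mul_ne_zero hne1 hne2)]
    push_cast
    rw [show ((h + k₁).factorial : ℚ)
        = (k₁.factorial : ℚ) * ((h + k₁).descFactorial h : ℚ) from by
          exact_mod_cast f1.symm,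
      show (((n - (L+1)) + k₁).factorial : ℚ)
        = ((n - (L+1)).factorial : ℚ) * (((n - (L+1)) + k₁).descFactorial k₁ : ℚ) from by
          exact_mod_cast f2.symm]
    ring
  · -- k = 0
    intro hk0
    have htgt : ¬ ((traceVerts Q).card + 1 ≤ L + 1) := by omega
    rw [hsplit2, Finset.card_union_of_disjoint hdisj, hc1, hc2, hB1, hB2]
    simp only [htgt, ↓reduceIte, Nat.add_zero]
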